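/- Let K be a standard bilinear Calderón–Zygmund kernel on ℝⁿ with exponent α ∈ (0,1] and constant C_K. Let J and K' be cubes with K' ⊂ J, ℓ(J) ≥ 4ℓ(K'), and d(K', ℝⁿ∖J) ≥ ℓ(K')^{1/2} ℓ(J)^{1/2} (ℓ^∞ distance). Let s be a measurable function supported in ℝⁿ∖J with |s| ≤ |J|^{−1/2} almost everywhere, and let h_{K'} be a cancellative Haar function of K' with center c_{K'}. Then the integral ∭ (K(x,y,z) − K(c_{K'},y,z)) s(y) 1_J(z) h_{K'}(x) dy dz dx (over x ∈ K') converges absolutely and |∭ (K(x,y,z) − K(c_{K'},y,z)) s(y) 1_J(z) h_{K'}(x) dy dz dx| ≤ C(n,α) C_K |K'|^{1/2} |J|^{−1/2} (ℓ(K')/ℓ(J))^{α/2}. -/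

import Mathlib

open MeasureTheory Set
open scoped ENNReal NNReal Classical

noncomputable section

namespace Bilinear

/-- Points of `ℝⁿ`, equipped with the `ℓ^∞` (sup) metric. -/
abbrev E (n : ℕ) : Type := Fin n → ℝ

/-- An axis-parallel cube in `ℝⁿ`, described by its lower corner and its side length. -/
structure Cube (n : ℕ) where
  corner : Fin n → ℝ
  side : ℝ
  side_pos : 0 < side

namespace Cube

variable {n : ℕ}

/-- The (half-open) cube as a subset of `ℝⁿ`. -/
def set (Q : Cube n) : Set (E n) :=
  {x | ∀ i, Q.corner i ≤ x i ∧ x i < Q.corner i + Q.side}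

/-- The closed cube as a subset of `ℝⁿ`. -/
def clSet (Q : Cube n) : Set (E n) :=
  {x | ∀ i, Q.corner i ≤ x i ∧ x i ≤ Q.corner i + Q.side}

/-- The volume `|Q| = ℓ(Q)ⁿ` of a cube. -/
def vol (Q : Cube n) : ℝ := Q.side ^ n

/-- The center of a cube. -/
def center (Q : Cube n) : E n := fun i => Q.corner i + Q.side / 2

/-- The concentric dilate `cQ` of a cube (defined for `c ≥ 1`; junk otherwise). -/
def dilate (Q : Cube n) (c : ℝ) : Cube n where
  corner := fun i => Q.corner i + Q.side / 2 - max c 1 * Q.side / 2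
  side := max c 1 * Q.side
  side_pos := mul_pos (lt_of_lt_of_le one_pos (le_max_right c 1)) Q.side_pos

end Cube

/-- The (`ℓ^∞`) distance between two sets of `ℝⁿ`. -/
def setDist {n : ℕ} (s t : Set (E n)) : ℝ := sInf (Set.image2 dist s t)

/-- The (`ℓ^∞`) distance between two cubes. -/
def cubeDist {n : ℕ} (Q R : Cube n) : ℝ := setDist Q.clSet R.clSet

/-- The indicator function `1_Q` of a cube, as a complex-valued function. -/
def indC {n : ℕ} (Q : Cube n) : E n → ℂ := fun x => if x ∈ Q.set then 1 else 0

/-- The average `⟨|f|⟩_Q` of `|f|` over a cube. -/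
def avgAbs {n : ℕ} (Q : Cube n) (f : E n → ℂ) : ℝ := Q.vol⁻¹ * ∫ x in Q.set, ‖f x‖

/-- The average `⟨f⟩_Q` of `f` over a cube. -/
def avg {n : ℕ} (Q : Cube n) (f : E n → ℂ) : ℂ := (Q.vol : ℂ)⁻¹ * ∫ x in Q.set, f x

/-- The `L^p` norm (`p` a real exponent) of `f : ℝⁿ → ℂ`. -/
def lpNorm {n : ℕ} (f : E n → ℂ) (p : ℝ) : ℝ := (eLpNorm f (ENNReal.ofReal p) volume).toReal

/-- `f` is bounded, measurable and compactly supported. -/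
def BddCompactSupp {n : ℕ} (f : E n → ℂ) : Prop :=
  Measurable f ∧ HasCompactSupport f ∧ ∃ M : ℝ, ∀ x, ‖f x‖ ≤ M

/-- The pairing `⟨f, g⟩ = ∫ f g`. -/
def pairing {n : ℕ} (f g : E n → ℂ) : ℂ := ∫ x, f x * g x

/-! ### Random dyadic grids -/

/-- The translation `Σ_{j : 2^{-j} < 2^{-k}} 2^{-j} ω^j` of the grid of scale `2^{-k}`. -/
def gridShift {n : ℕ} (ω : ℤ → Fin n → Bool) (k : ℤ) (i : Fin n) : ℝ :=
  ∑' j : {j : ℤ // k < j}, (2 : ℝ) ^ (-(j.1)) * (if ω j.1 i then 1 else 0)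

/-- The shifted dyadic grid `𝒟_ω = {I + ω : I ∈ 𝒟₀}`. -/
def dyadicGrid {n : ℕ} (ω : ℤ → Fin n → Bool) : Set (Cube n) :=
  {Q | ∃ (k : ℤ) (m : Fin n → ℤ), Q.side = (2 : ℝ) ^ (-k) ∧
    ∀ i, Q.corner i = (m i : ℝ) * (2 : ℝ) ^ (-k) + gridShift ω k i}

/-- A dyadic grid is a translate-type grid `𝒟_ω` of the standard grid. -/
def IsDyadicGrid {n : ℕ} (𝒟 : Set (Cube n)) : Prop := ∃ ω, 𝒟 = dyadicGrid ω

/-- A grid has no quadrants if every strictly increasing chain of cubes exhausts `ℝⁿ`;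
equivalently, every cube of the grid and every point are contained in a common bigger
grid cube. -/
def NoQuadrants {n : ℕ} (𝒟 : Set (Cube n)) : Prop :=
  ∀ Q ∈ 𝒟, ∀ x : E n, ∃ R ∈ 𝒟, Q.set ⊆ R.set ∧ x ∈ R.set

/-- A cube `I` of a grid `𝒟` is good (with parameters `r, γ`) if for every `J ∈ 𝒟` with
`ℓ(J) ≥ 2^r ℓ(I)` one has `d(I, ∂J) > ℓ(I)^γ ℓ(J)^(1-γ)`. -/
def IsGood {n : ℕ} (𝒟 : Set (Cube n)) (r : ℕ) (γ : ℝ) (I : Cube n) : Prop :=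
  ∀ J ∈ 𝒟, (2 : ℝ) ^ r * I.side ≤ J.side →
    I.side ^ γ * J.side ^ (1 - γ) < setDist I.clSet (frontier J.set)

/-! ### Haar functions -/

/-- One-dimensional Haar functions on the interval `[a, a+l)`:
noncancellative (`e = false`) and cancellative (`e = true`). -/
def haar1 (a l : ℝ) (e : Bool) (t : ℝ) : ℝ :=
  if a ≤ t ∧ t < a + l then
    if e then (if t < a + l / 2 then l ^ (-(1 : ℝ) / 2) else -(l ^ (-(1 : ℝ) / 2)))
    else l ^ (-(1 : ℝ) / 2)
  else 0

/-- The Haar function `h_Q^η` of a cube `Q ⊂ ℝⁿ`. It is cancellative iff `η ≠ 0`. -/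
def haar {n : ℕ} (Q : Cube n) (η : Fin n → Bool) : E n → ℝ :=
  fun x => ∏ i, haar1 (Q.corner i) Q.side (η i) (x i)

/-- The pairing `⟨f, h_Q^η⟩`. -/
def haarPairing {n : ℕ} (f : E n → ℂ) (Q : Cube n) (η : Fin n → Bool) : ℂ :=
  ∫ x, f x * (haar Q η x : ℂ)

/-! ### Bilinear Calderón–Zygmund kernels and truncated operators -/


/-- `K` is a (measurable) standard bilinear Calderón–Zygmund kernel on `ℝⁿ` with Hölder
exponent `α` and constant `C`: size bound and Hölder bounds in each of the three
variables, away from the diagonal `Δ = {x = y = z}`. -/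
def CZBounds (n : ℕ) (α : ℝ) (K : E n → E n → E n → ℂ) (C : ℝ) : Prop :=
  Measurable (fun p : E n × E n × E n => K p.1 p.2.1 p.2.2) ∧
  (∀ x y z : E n, ¬(x = y ∧ y = z) →
    ‖K x y z‖ ≤ C / (dist x y + dist x z) ^ (2 * n)) ∧
  (∀ x x' y z : E n, ¬(x = y ∧ y = z) → ¬(x' = y ∧ y = z) →
    dist x x' ≤ max (dist x y) (dist x z) / 2 →
    ‖K x y z - K x' y z‖ ≤ C * dist x x' ^ α / (dist x y + dist x z) ^ (2 * (n : ℝ) + α)) ∧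
  (∀ x y y' z : E n, ¬(x = y ∧ y = z) → ¬(x = y' ∧ y' = z) →
    dist y y' ≤ max (dist x y) (dist x z) / 2 →
    ‖K x y z - K x y' z‖ ≤ C * dist y y' ^ α / (dist x y + dist x z) ^ (2 * (n : ℝ) + α)) ∧
  (∀ x y z z' : E n, ¬(x = y ∧ y = z) → ¬(x = y ∧ y = z') →
    dist z z' ≤ max (dist x y) (dist x z) / 2 →
    ‖K x y z - K x y z'‖ ≤ C * dist z z' ^ α / (dist x y + dist x z) ^ (2 * (n : ℝ) + α))

/-- The truncated bilinear singular integral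
`T_ε(f,g)(x) = ∬_{max(|x-y|,|x-z|) > ε} K(x,y,z) f(y) g(z) dy dz`. -/
def truncT {n : ℕ} (K : E n → E n → E n → ℂ) (ε : ℝ) (f g : E n → ℂ) (x : E n) : ℂ :=
  ∫ y, ∫ z, if ε < max (dist x y) (dist x z) then K x y z * f y * g z else 0

/-- The class `𝒜` of smooth truncation profiles: smooth `φ` with values in `[0,1]`,
vanishing on `[0,1/2]`, equal to `1` on `[1,∞)`, and `‖φ'‖_∞ ≤ 10`. -/
def memA (φ : ℝ → ℝ) : Prop :=
  ContDiff ℝ (⊤ : ℕ∞) φ ∧ (∀ t, φ t ∈ Set.Icc (0 : ℝ) 1) ∧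
    (∀ t ≤ (1 : ℝ) / 2, φ t = 0) ∧ (∀ t, (1 : ℝ) ≤ t → φ t = 1) ∧ ∀ t, |deriv φ t| ≤ 10

/-- The smoothly truncated kernel `K_ε^φ(x,y,z) = K(x,y,z) φ((|x-y|+|x-z|)/ε)`. -/
def smoothK {n : ℕ} (K : E n → E n → E n → ℂ) (φ : ℝ → ℝ) (ε : ℝ) :
    E n → E n → E n → ℂ :=
  fun x y z => K x y z * ((φ ((dist x y + dist x z) / ε) : ℝ) : ℂ)

/-- The smoothly truncated operator `T_ε^φ(f,g)(x) = ∬ K_ε^φ(x,y,z) f(y) g(z) dy dz`. -/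
def smoothT {n : ℕ} (K : E n → E n → E n → ℂ) (φ : ℝ → ℝ) (ε : ℝ) (f g : E n → ℂ)
    (x : E n) : ℂ :=
  ∫ y, ∫ z, smoothK K φ ε x y z * f y * g z

/-- The first adjoint kernel, `K^{1*}(x,y,z) = K(y,x,z)`. -/
def adj1 {n : ℕ} (K : E n → E n → E n → ℂ) : E n → E n → E n → ℂ := fun x y z => K y x z

/-- The second adjoint kernel, `K^{2*}(x,y,z) = K(z,y,x)`. -/
def adj2 {n : ℕ} (K : E n → E n → E n → ℂ) : E n → E n → E n → ℂ := fun x y z => K z y x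

/-- `C` is a weak boundedness constant of the bilinear operator `T`:
`|⟨T(1_I,1_I), 1_I⟩| ≤ C |I|` for all cubes `I ⊂ ℝⁿ`. -/
def WBPBound {n : ℕ} (T : (E n → ℂ) → (E n → ℂ) → E n → ℂ) (C : ℝ) : Prop :=
  ∀ Q : Cube n, ‖∫ x in Q.set, T (indC Q) (indC Q) x‖ ≤ C * Q.vol

/-! ### The `BMO` pairings `⟨T_ε(1,1), φ₀⟩` and testing conditions -/

/-- The pairing `⟨T_ε(1,1), φ₀⟩`, defined (for `φ₀` supported in the cube `R`, with mean
zero, and `c ≥ 3` a dilation factor) as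
`⟨T_ε(1_{cR},1_{cR}), φ₀⟩ + ∭ (K(x,y,z) - K(c_R,y,z)) 1_{(cR×cR)ᶜ}(y,z) φ₀(x) dy dz dx`. -/
def bmoPairing {n : ℕ} (K : E n → E n → E n → ℂ) (ε : ℝ) (φ₀ : E n → ℂ) (R : Cube n)
    (c : ℝ) : ℂ :=
  (∫ x, truncT K ε (indC (R.dilate c)) (indC (R.dilate c)) x * φ₀ x) +
    ∫ x, φ₀ x * ∫ y, ∫ z,
      if y ∈ (R.dilate c).set ∧ z ∈ (R.dilate c).set then 0
      else K x y z - K R.center y z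

/-- The pairing `⟨T_ε^{1*}(1,1), φ₀⟩ = ⟨T_ε(φ₀, 1_{cR}), 1_{cR}⟩ + (correction with K^{1*})`. -/
def bmoPairing1 {n : ℕ} (K : E n → E n → E n → ℂ) (ε : ℝ) (φ₀ : E n → ℂ) (R : Cube n)
    (c : ℝ) : ℂ :=
  (∫ x, truncT K ε φ₀ (indC (R.dilate c)) x * indC (R.dilate c) x) +
    ∫ x, φ₀ x * ∫ y, ∫ z,
      if y ∈ (R.dilate c).set ∧ z ∈ (R.dilate c).set then 0
      else adj1 K x y z - adj1 K R.center y z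

/-- The pairing `⟨T_ε^{2*}(1,1), φ₀⟩ = ⟨T_ε(1_{cR}, φ₀), 1_{cR}⟩ + (correction with K^{2*})`. -/
def bmoPairing2 {n : ℕ} (K : E n → E n → E n → ℂ) (ε : ℝ) (φ₀ : E n → ℂ) (R : Cube n)
    (c : ℝ) : ℂ :=
  (∫ x, truncT K ε (indC (R.dilate c)) φ₀ x * indC (R.dilate c) x) +
    ∫ x, φ₀ x * ∫ y, ∫ z,
      if y ∈ (R.dilate c).set ∧ z ∈ (R.dilate c).set then 0
      else adj2 K x y z - adj2 K R.center y z

/-- `B` is an admissible `BMO` bound for `T_ε(1,1)`: `|⟨T_ε(1,1), φ₀⟩| ≤ B |R|`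
over all admissible testing data. -/
def BMOBound {n : ℕ} (K : E n → E n → E n → ℂ) (ε : ℝ) (B : ℝ) : Prop :=
  ∀ (R : Cube n) (φ₀ : E n → ℂ), Measurable φ₀ → Function.support φ₀ ⊆ R.clSet →
    (∀ x, ‖φ₀ x‖ ≤ 1) → (∫ x, φ₀ x) = 0 →
    ∀ c : ℝ, 3 ≤ c → ε < 2⁻¹ * (c - 1) * R.side →
      ‖bmoPairing K ε φ₀ R c‖ ≤ B * R.vol

/-- `B` is an admissible `BMO` bound for `T_ε^{1*}(1,1)`. -/
def BMOBound1 {n : ℕ} (K : E n → E n → E n → ℂ) (ε : ℝ) (B : ℝ) : Prop :=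
  ∀ (R : Cube n) (φ₀ : E n → ℂ), Measurable φ₀ → Function.support φ₀ ⊆ R.clSet →
    (∀ x, ‖φ₀ x‖ ≤ 1) → (∫ x, φ₀ x) = 0 →
    ∀ c : ℝ, 3 ≤ c → ε < 2⁻¹ * (c - 1) * R.side →
      ‖bmoPairing1 K ε φ₀ R c‖ ≤ B * R.vol

/-- `B` is an admissible `BMO` bound for `T_ε^{2*}(1,1)`. -/
def BMOBound2 {n : ℕ} (K : E n → E n → E n → ℂ) (ε : ℝ) (B : ℝ) : Prop :=
  ∀ (R : Cube n) (φ₀ : E n → ℂ), Measurable φ₀ → Function.support φ₀ ⊆ R.clSet →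
    (∀ x, ‖φ₀ x‖ ≤ 1) → (∫ x, φ₀ x) = 0 →
    ∀ c : ℝ, 3 ≤ c → ε < 2⁻¹ * (c - 1) * R.side →
      ‖bmoPairing2 K ε φ₀ R c‖ ≤ B * R.vol

/-! ### Sparse collections -/

/-- A collection `𝒮` of cubes is `η`-sparse: every `Q ∈ 𝒮` carries a major measurable
subset `E_Q ⊆ Q` with `|E_Q| > η |Q|`, the sets `E_Q` being pairwise disjoint. -/
def IsSparse {n : ℕ} (η : ℝ) (𝒮 : Set (Cube n)) : Prop :=
  ∃ Esel : Cube n → Set (E n),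
    (∀ Q ∈ 𝒮, MeasurableSet (Esel Q) ∧ Esel Q ⊆ Q.set ∧
      ENNReal.ofReal (η * Q.vol) < MeasureTheory.volume (Esel Q)) ∧
    𝒮.Pairwise fun Q R => Disjoint (Esel Q) (Esel R)

/-- The sparse form `Λ_𝒮(f₁,f₂,f₃) = Σ_{Q ∈ 𝒮} |Q| ⟨|f₁|⟩_Q ⟨|f₂|⟩_Q ⟨|f₃|⟩_Q`. -/
def sparseForm {n : ℕ} (𝒮 : Set (Cube n)) (f₁ f₂ f₃ : E n → ℂ) : ℝ :=
  ∑' Q : 𝒮, (Q : Cube n).vol * avgAbs Q f₁ * avgAbs Q f₂ * avgAbs Q f₃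

/-! ### Bilinear dyadic shifts and paraproducts, as trilinear forms -/

/-- A trilinear form on functions on `ℝⁿ`. -/
abbrev TriForm (n : ℕ) : Type := (E n → ℂ) → (E n → ℂ) → (E n → ℂ) → ℂ

/-- The index set of a bilinear dyadic shift of complexity `(i,j,k)` in the grid `𝒟`:
tuples of cubes `I, J, K ⊆ Q` of `𝒟` with `ℓ(I) = 2^{-i} ℓ(Q)`, `ℓ(J) = 2^{-j} ℓ(Q)`,
`ℓ(K) = 2^{-k} ℓ(Q)`, together with Haar signatures, `h_K` being cancellative and at most
one of `h_I, h_J` being noncancellative. -/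
structure ShiftIndex (n : ℕ) (𝒟 : Set (Cube n)) (i j k : ℕ) where
  Q : Cube n
  I : Cube n
  J : Cube n
  K : Cube n
  ηf : Fin n → Bool
  ηg : Fin n → Bool
  ηh : Fin n → Bool
  memQ : Q ∈ 𝒟
  memI : I ∈ 𝒟
  memJ : J ∈ 𝒟
  memK : K ∈ 𝒟
  subI : I.set ⊆ Q.set
  subJ : J.set ⊆ Q.set
  subK : K.set ⊆ Q.set
  sideI : I.side = Q.side / 2 ^ i
  sideJ : J.side = Q.side / 2 ^ j
  sideK : K.side = Q.side / 2 ^ k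
  cancel_h : ηh ≠ fun _ => false
  cancel_fg : ¬(ηf = (fun _ => false) ∧ ηg = (fun _ => false))

/-- `Λ` is (the trilinear form of) a cancellative bilinear dyadic shift of complexity
`(i,j,k)` in the grid `𝒟`: `Λ(f,g,h) = Σ α_{I,J,K,Q} ⟨f, h̃_I⟩ ⟨g, h̃_J⟩ ⟨h, h_K⟩`
with `|α_{I,J,K,Q}| ≤ |I|^{1/2} |J|^{1/2} |K|^{1/2} / |Q|²`. -/
def IsShiftForm {n : ℕ} (𝒟 : Set (Cube n)) (i j k : ℕ) (Λ : TriForm n) : Prop :=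
  ∃ α : ShiftIndex n 𝒟 i j k → ℂ,
    (∀ t, ‖α t‖ ≤ Real.sqrt (t.I.vol * t.J.vol * t.K.vol) / t.Q.vol ^ 2) ∧
    ∀ f g h, Λ f g h =
      ∑' t : ShiftIndex n 𝒟 i j k,
        α t * haarPairing f t.I t.ηf * haarPairing g t.J t.ηg * haarPairing h t.K t.ηh

/-- `Λ` is a cancellative bilinear shift of complexity `(i,i,k)` or `(i,i+1,k)` in `𝒟`,
or an adjoint (`⟨S^{1*}(f,g),h⟩ = ⟨S(h,g),f⟩`, `⟨S^{2*}(f,g),h⟩ = ⟨S(f,h),g⟩`) of such. -/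
def IsExtShiftForm {n : ℕ} (𝒟 : Set (Cube n)) (i k : ℕ) (Λ : TriForm n) : Prop :=
  ∃ Λ₀ : TriForm n, (IsShiftForm 𝒟 i i k Λ₀ ∨ IsShiftForm 𝒟 i (i + 1) k Λ₀) ∧
    ((∀ f g h, Λ f g h = Λ₀ f g h) ∨ (∀ f g h, Λ f g h = Λ₀ h g f) ∨
      (∀ f g h, Λ f g h = Λ₀ f h g))

/-- The index set of a bilinear paraproduct in the grid `𝒟`: cubes `K ∈ 𝒟` with a
cancellative Haar signature. -/
structure ParaIndex (n : ℕ) (𝒟 : Set (Cube n)) where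
  K : Cube n
  η : Fin n → Bool
  mem : K ∈ 𝒟
  cancel : η ≠ fun _ => false

/-- `Λ` is (the trilinear form of) a bilinear paraproduct
`Π_β(f,g) = Σ_K β_K ⟨f⟩_K ⟨g⟩_K h_K` in the grid `𝒟`, with coefficients satisfying the
Carleson normalization `Σ_{K ⊆ K₀} |β_K|² ≤ |K₀|` for all `K₀ ∈ 𝒟`. -/
def IsParaForm {n : ℕ} (𝒟 : Set (Cube n)) (Λ : TriForm n) : Prop :=
  ∃ β : ParaIndex n 𝒟 → ℂ,
    (∀ K₀ ∈ 𝒟, (∑' t : {t : ParaIndex n 𝒟 // t.K.set ⊆ K₀.set},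
        ((‖β t.1‖₊ : ℝ≥0∞) ^ 2)) ≤ ENNReal.ofReal K₀.vol) ∧
    ∀ f g h, Λ f g h =
      ∑' t : ParaIndex n 𝒟, β t * avg t.K f * avg t.K g * haarPairing h t.K t.η

/-!
For `x ∈ K'` and `y ∉ J` the centre `c` of `K'` is at distance at least
`D = d(K', ℝⁿ ∖ J) ≥ ℓ(K')` from `y`, so the Hölder estimate in the first variable gives
`|K(x,y,z) − K(c,y,z)| ≤ C_K ℓ(K')^α (|c−y| + |c−z|)^{−(2n+α)}`. Writing `2n + α = 2q` and
using `|c−y| ≥ D`, this is at most `2^q C_K ℓ(K')^α (D + |c−y|)^{−q} (D + |c−z|)^{−q}`, a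
product of functions of `y` and `z` each of which integrates, by scaling, to a constant times
`D^{−α/2}`. With `|s| ≤ |J|^{−1/2}` and `|h_{K'}| ≤ |K'|^{−1/2} 1_{K'}` the integrand is
dominated by an integrable function of integral `≲ C_K |K'|^{1/2} |J|^{−1/2} (ℓ(K')/D)^α`, and
`D ≥ (ℓ(K') ℓ(J))^{1/2}` turns `(ℓ(K')/D)^α` into `(ℓ(K')/ℓ(J))^{α/2}`.
-/

namespace Cube

variable {n : ℕ}

lemma set_eq_pi (Q : Cube n) :
    Q.set = Set.univ.pi fun i => Set.Ico (Q.corner i) (Q.corner i + Q.side) := by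
  ext x
  simp [Cube.set, Set.mem_pi]

lemma measurableSet_set (Q : Cube n) : MeasurableSet Q.set := by
  rw [set_eq_pi]
  exact MeasurableSet.univ_pi fun _ => measurableSet_Ico

lemma volume_set (Q : Cube n) : volume Q.set = ENNReal.ofReal Q.vol := by
  rw [set_eq_pi, Real.volume_pi_Ico]
  simp [Cube.vol, ENNReal.ofReal_pow Q.side_pos.le]

lemma center_mem_clSet (Q : Cube n) : Q.center ∈ Q.clSet := fun i => by
  have := Q.side_pos
  constructor <;> simp only [Cube.center] <;> linarith

lemma dist_center_le (Q : Cube n) {x : E n} (hx : x ∈ Q.set) :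
    dist Q.center x ≤ Q.side / 2 := by
  refine (dist_pi_le_iff (by linarith [Q.side_pos])).2 fun i => ?_
  rw [Real.dist_eq, abs_le]
  constructor <;> simp only [Cube.center] <;> linarith [hx i]

end Cube

lemma setDist_le_dist {n : ℕ} {s t : Set (E n)} {a b : E n} (ha : a ∈ s) (hb : b ∈ t) :
    setDist s t ≤ dist a b :=
  csInf_le ⟨0, by rintro _ ⟨_, -, _, -, rfl⟩; exact dist_nonneg⟩ (mem_image2_of_mem ha hb)

lemma measurable_indC {n : ℕ} (Q : Cube n) : Measurable (indC Q) :=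
  Measurable.ite Q.measurableSet_set measurable_const measurable_const

lemma norm_indC_le {n : ℕ} (Q : Cube n) (x : E n) : ‖indC Q x‖ ≤ 1 := by
  unfold indC
  split_ifs <;> simp

lemma abs_haar1_le (a l : ℝ) (e : Bool) (t : ℝ) :
    |haar1 a l e t| ≤ (Set.Ico a (a + l)).indicator (fun _ => (√l)⁻¹) t := by
  by_cases ht : t ∈ Set.Ico a (a + l)
  · have hpow : l ^ (-(1 : ℝ) / 2) = (√l)⁻¹ := by
      rw [neg_div, Real.rpow_neg (by linarith [ht.1, ht.2]), Real.sqrt_eq_rpow]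
    rw [indicator_of_mem ht]
    unfold haar1
    split_ifs <;> simp [hpow, abs_of_nonneg (Real.sqrt_nonneg l)]
  · rw [indicator_of_notMem ht]
    simp [haar1, show ¬(a ≤ t ∧ t < a + l) from ht]

lemma measurable_haar1 (a l : ℝ) (e : Bool) : Measurable (haar1 a l e) :=
  Measurable.ite measurableSet_Ico (Measurable.ite (.const _)
    (Measurable.ite measurableSet_Iio measurable_const measurable_const) measurable_const)
    measurable_const

section

variable {n : ℕ}

lemma abs_haar_le (Q : Cube n) (η : Fin n → Bool) (x : E n) :
    |haar Q η x| ≤ Q.set.indicator (fun _ => (√Q.vol)⁻¹) x := by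
  by_cases hx : x ∈ Q.set
  · rw [indicator_of_mem hx, haar, Finset.abs_prod]
    calc ∏ i, |haar1 (Q.corner i) Q.side (η i) (x i)| ≤ ∏ _i : Fin n, (√Q.side)⁻¹ :=
          Finset.prod_le_prod (fun _ _ => abs_nonneg _) fun i _ =>
            (abs_haar1_le _ _ _ _).trans_eq (indicator_of_mem (s := Set.Ico _ _) (hx i) _)
      _ = (√Q.vol)⁻¹ := by
          rw [Finset.prod_const, Finset.card_fin, inv_pow, Cube.vol, inv_inj, eq_comm,
            Real.sqrt_eq_iff_mul_self_eq (pow_nonneg Q.side_pos.le n) (by positivity),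
            ← mul_pow, Real.mul_self_sqrt Q.side_pos.le]
  · rw [indicator_of_notMem hx]
    obtain ⟨i, hi⟩ : ∃ i, x i ∉ Set.Ico (Q.corner i) (Q.corner i + Q.side) := by
      simpa [Cube.set_eq_pi, Set.mem_pi] using hx
    have h := abs_haar1_le (Q.corner i) Q.side (η i) (x i)
    rw [indicator_of_notMem hi, abs_nonpos_iff] at h
    have h0 : haar Q η x = 0 := Finset.prod_eq_zero (Finset.mem_univ i) h
    rw [h0, abs_zero]

lemma measurable_haar (Q : Cube n) (η : Fin n → Bool) : Measurable (haar Q η) :=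
  Finset.measurable_prod _ fun i _ => (measurable_haar1 _ _ _).comp (measurable_pi_apply i)

end

section Decay

variable {F : Type*} [NormedAddCommGroup F] [NormedSpace ℝ F] {q D : ℝ}

lemma add_dist_rpow_neg_eq (hD : 0 < D) (c z : F) :
    (D + dist c z) ^ (-q) = D ^ (-q) * (1 + ‖D⁻¹ • (z - c)‖) ^ (-q) := by
  have h : D + dist c z = D * (1 + ‖D⁻¹ • (z - c)‖) := by
    rw [norm_smul, Real.norm_eq_abs, abs_of_pos (inv_pos.2 hD), dist_comm, dist_eq_norm]
    field_simp
  rw [h, Real.mul_rpow hD.le (by positivity)]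

variable [FiniteDimensional ℝ F] [MeasurableSpace F] [BorelSpace F] (μ : Measure F)
  [μ.IsAddHaarMeasure]

lemma integrable_add_dist_rpow_neg (hq : (Module.finrank ℝ F : ℝ) < q) (hD : 0 < D) (c : F) :
    Integrable (fun z => (D + dist c z) ^ (-q)) μ := by
  simp_rw [add_dist_rpow_neg_eq hD c]
  exact (((integrable_comp_smul_iff μ _ (inv_ne_zero hD.ne')).2
    (integrable_one_add_norm hq)).comp_sub_right c).const_mul _

lemma integral_add_dist_rpow_neg (hD : 0 < D) (c : F) :
    ∫ z, (D + dist c z) ^ (-q) ∂μ =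
      D ^ ((Module.finrank ℝ F : ℝ) - q) * ∫ w, (1 + ‖w‖) ^ (-q) ∂μ := by
  simp_rw [add_dist_rpow_neg_eq hD c]
  rw [integral_const_mul, integral_sub_right_eq_self (fun x => (1 + ‖D⁻¹ • x‖) ^ (-q)) c,
    Measure.integral_comp_inv_smul_of_nonneg μ (fun x => (1 + ‖x‖) ^ (-q)) hD.le, smul_eq_mul,
    ← mul_assoc, ← Real.rpow_natCast, ← Real.rpow_add hD, sub_eq_neg_add]

lemma integral_one_add_norm_rpow_neg_pos (hq : (Module.finrank ℝ F : ℝ) < q) :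
    0 < ∫ w, (1 + ‖w‖) ^ (-q) ∂μ := by
  refine (integral_pos_iff_support_of_nonneg (fun w => by positivity)
    (integrable_one_add_norm hq)).2 ?_
  rw [Function.support_eq_univ fun w => (Real.rpow_pos_of_pos (by positivity) _).ne']
  exact Measure.measure_univ_pos.2 (NeZero.ne μ)

end Decay

lemma inv_add_rpow_two_mul_le {a b D q : ℝ} (hD : 0 < D) (ha : D ≤ a) (hb : 0 ≤ b)
    (hq : 0 ≤ q) : ((a + b) ^ (2 * q))⁻¹ ≤ 2 ^ q * (D + a) ^ (-q) * (D + b) ^ (-q) := by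
  have ha₀ : 0 < a := hD.trans_le ha
  have h₁ : ((D + a) / 2) ^ q ≤ (a + b) ^ q :=
    Real.rpow_le_rpow (by positivity) (by linarith) hq
  have h₂ : (D + b) ^ q ≤ (a + b) ^ q := Real.rpow_le_rpow (by positivity) (by linarith) hq
  calc ((a + b) ^ (2 * q))⁻¹ = ((a + b) ^ q * (a + b) ^ q)⁻¹ := by
        rw [two_mul, Real.rpow_add (by linarith)]
    _ ≤ (((D + a) / 2) ^ q * (D + b) ^ q)⁻¹ :=
        inv_anti₀ (by positivity) (mul_le_mul h₁ h₂ (by positivity) (by positivity))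
    _ = 2 ^ q * (D + a) ^ (-q) * (D + b) ^ (-q) := by
        rw [Real.div_rpow (by positivity) zero_le_two, Real.rpow_neg (by positivity),
          Real.rpow_neg (by positivity)]
        field_simp

lemma rpow_mul_rpow_neg_le_of_rpow_half_mul_le {l L D α : ℝ} (hl : 0 < l) (hL : 0 < L)
    (hα : 0 ≤ α) (hD : l ^ ((1 : ℝ) / 2) * L ^ ((1 : ℝ) / 2) ≤ D) :
    l ^ α * D ^ (-α) ≤ (l / L) ^ (α / 2) := by
  have hl₂ : 0 < l ^ ((1 : ℝ) / 2) := Real.rpow_pos_of_pos hl _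
  have hL₂ : 0 < L ^ ((1 : ℝ) / 2) := Real.rpow_pos_of_pos hL _
  have hD₀ : 0 < D := (mul_pos hl₂ hL₂).trans_le hD
  have hsq : l ^ ((1 : ℝ) / 2) * l ^ ((1 : ℝ) / 2) = l := by
    rw [← Real.rpow_add hl]; norm_num
  have hratio : l / D ≤ l ^ ((1 : ℝ) / 2) / L ^ ((1 : ℝ) / 2) := by
    rw [div_le_div_iff₀ hD₀ hL₂]
    nlinarith
  calc l ^ α * D ^ (-α) = (l / D) ^ α := by
        rw [Real.rpow_neg hD₀.le, Real.div_rpow hl.le hD₀.le, div_eq_mul_inv]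
    _ ≤ (l ^ ((1 : ℝ) / 2) / L ^ ((1 : ℝ) / 2)) ^ α := by gcongr
    _ = (l / L) ^ (α / 2) := by
        rw [← Real.div_rpow hl.le hL.le, ← Real.rpow_mul (by positivity)]
        ring_nf

lemma le_of_rpow_half_mul_le {l L D : ℝ} (hl : 0 ≤ l) (hlL : l ≤ L)
    (hD : l ^ ((1 : ℝ) / 2) * L ^ ((1 : ℝ) / 2) ≤ D) : l ≤ D :=
  calc l = l ^ ((1 : ℝ) / 2) * l ^ ((1 : ℝ) / 2) := by
        rw [← Real.rpow_add' hl (by norm_num)]; norm_num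
    _ ≤ l ^ ((1 : ℝ) / 2) * L ^ ((1 : ℝ) / 2) := by gcongr
    _ ≤ D := hD

section

variable {n : ℕ} {α C : ℝ} {K : E n → E n → E n → ℂ}

lemma CZBounds.const_nonneg (hK : CZBounds n α K C) (hn : 0 < n) : 0 ≤ C := by
  set y : E n := fun _ => 1
  have hy : (0 : E n) ≠ y := fun h => by simpa [y] using congrFun h ⟨0, hn⟩
  have hsize := (norm_nonneg _).trans (hK.2.1 0 y y fun h => hy h.1)
  have hden : 0 < (dist 0 y + dist 0 y) ^ (2 * n) := by
    have := dist_pos.2 hy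
    positivity
  simpa using (le_div_iff₀ hden).1 hsize

lemma CZBounds.norm_sub_center_le (hK : CZBounds n α K C) (hC : 0 ≤ C) (hα : 0 ≤ α)
    {c x y z : E n} {D : ℝ} (hD : 0 < D) (hx : 2 * dist c x ≤ D) (hy : D ≤ dist c y) :
    ‖K x y z - K c y z‖ ≤
      C * dist c x ^ α * (2 ^ ((n : ℝ) + α / 2) * (D + dist c y) ^ (-((n : ℝ) + α / 2)) *
        (D + dist c z) ^ (-((n : ℝ) + α / 2))) := by
  have hcy : c ≠ y := by rintro rfl; rw [dist_self] at hy; linarith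
  have hxy : x ≠ y := by
    rintro rfl
    linarith [dist_nonneg (x := c) (y := x)]
  have hHolder := hK.2.2.1 c x y z (fun h => hcy h.1) (fun h => hxy h.1)
    (by linarith [le_max_left (dist c y) (dist c z)])
  rw [norm_sub_rev, div_eq_mul_inv, show 2 * (n : ℝ) + α = 2 * ((n : ℝ) + α / 2) by ring]
    at hHolder
  refine hHolder.trans (mul_le_mul_of_nonneg_left ?_ (by positivity))
  exact inv_add_rpow_two_mul_le hD hy dist_nonneg (by positivity)

end

lemma integral_indicator_inv_sqrt_vol {n : ℕ} (Q : Cube n) :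
    Integrable (Q.set.indicator fun _ => (√Q.vol)⁻¹) ∧
      ∫ x, Q.set.indicator (fun _ => (√Q.vol)⁻¹) x = √Q.vol := by
  have hvol : 0 ≤ Q.vol := pow_nonneg Q.side_pos.le n
  refine ⟨(integrable_indicator_iff Q.measurableSet_set).2
    (integrableOn_const (by simp [Q.volume_set])), ?_⟩
  rw [integral_indicator_const _ Q.measurableSet_set, measureReal_def, Q.volume_set,
    ENNReal.toReal_ofReal hvol, smul_eq_mul, ← div_eq_mul_inv, Real.div_sqrt]

lemma integral_prod_mul₃ {X Y Z : Type*} [MeasurableSpace X] [MeasurableSpace Y]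
    [MeasurableSpace Z] {μ : Measure X} {ν : Measure Y} {ρ : Measure Z} [SFinite μ] [SFinite ν]
    [SFinite ρ] {f : X → ℝ} {g : Y → ℝ} {h : Z → ℝ} (hf : Integrable f μ)
    (hg : Integrable g ν) (hh : Integrable h ρ) :
    Integrable (fun t : X × Y × Z => f t.1 * (g t.2.1 * h t.2.2)) (μ.prod (ν.prod ρ)) ∧
      ∫ t, f t.1 * (g t.2.1 * h t.2.2) ∂(μ.prod (ν.prod ρ)) =
        (∫ x, f x ∂μ) * ((∫ y, g y ∂ν) * ∫ z, h z ∂ρ) := by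
  refine ⟨hf.mul_prod (hg.mul_prod hh), ?_⟩
  rw [integral_prod_mul f fun yz : Y × Z => g yz.1 * h yz.2, integral_prod_mul g h]

lemma integral_indicator_mul_decay {n : ℕ} {α D : ℝ} (hα : 0 < α) (hD : 0 < D) (Q : Cube n) :
    Integrable (fun t : E n × E n × E n => Q.set.indicator (fun _ => (√Q.vol)⁻¹) t.1 *
      ((D + dist Q.center t.2.1) ^ (-((n : ℝ) + α / 2)) *
        (D + dist Q.center t.2.2) ^ (-((n : ℝ) + α / 2)))) ∧
    ∫ t : E n × E n × E n, Q.set.indicator (fun _ => (√Q.vol)⁻¹) t.1 *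
      ((D + dist Q.center t.2.1) ^ (-((n : ℝ) + α / 2)) *
        (D + dist Q.center t.2.2) ^ (-((n : ℝ) + α / 2))) =
      √Q.vol * ((∫ w : E n, (1 + ‖w‖) ^ (-((n : ℝ) + α / 2))) ^ 2 * D ^ (-α)) := by
  have hq : (Module.finrank ℝ (E n) : ℝ) < n + α / 2 := by
    rw [Module.finrank_fin_fun]; linarith
  have hf := integrable_add_dist_rpow_neg volume hq hD Q.center
  have hf' := integral_add_dist_rpow_neg volume (q := n + α / 2) hD Q.center
  rw [Module.finrank_fin_fun, show (n : ℝ) - (n + α / 2) = -(α / 2) by ring] at hf'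
  obtain ⟨hg, hg'⟩ := integral_indicator_inv_sqrt_vol Q
  obtain ⟨hint, hval⟩ := integral_prod_mul₃ hg hf hf
  rw [Measure.volume_eq_prod, Measure.volume_eq_prod]
  refine ⟨hint, ?_⟩
  rw [hval, hf', hg', show -α = -(α / 2) + -(α / 2) by ring, Real.rpow_add hD]
  ring

section ErrorTerm

variable {n : ℕ} {α CK : ℝ} {K : E n → E n → E n → ℂ} {J K' : Cube n} {s : E n → ℂ}

def errorIntegrand (K : E n → E n → E n → ℂ) (s : E n → ℂ) (J K' : Cube n) (η : Fin n → Bool)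
    (t : E n × E n × E n) : ℂ :=
  (K t.1 t.2.1 t.2.2 - K K'.center t.2.1 t.2.2) * s t.2.1 * indC J t.2.2 *
    ((haar K' η t.1 : ℝ) : ℂ)

lemma measurable_errorIntegrand (hK : CZBounds n α K CK) (hs : Measurable s)
    (η : Fin n → Bool) : Measurable (errorIntegrand K s J K' η) :=
  (((hK.1.sub (hK.1.comp (measurable_const.prodMk measurable_snd))).mul
    (hs.comp (measurable_fst.comp measurable_snd))).mul
      ((measurable_indC J).comp (measurable_snd.comp measurable_snd))).mul
    (Complex.measurable_ofReal.comp ((measurable_haar K' η).comp measurable_fst))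

lemma norm_errorIntegrand_le (hK : CZBounds n α K CK) (hCK : 0 ≤ CK) (hα : 0 ≤ α) {D : ℝ}
    (hsideD : K'.side ≤ D) (hDJ : ∀ y ∉ J.set, D ≤ dist K'.center y)
    (hs : Function.support s ⊆ (J.set)ᶜ) (η : Fin n → Bool) {c₀ : ℝ} {x y z : E n}
    (hsy : ‖s y‖ ≤ c₀) :
    ‖errorIntegrand K s J K' η (x, y, z)‖ ≤
      CK * K'.side ^ α * 2 ^ ((n : ℝ) + α / 2) * c₀ *
        (K'.set.indicator (fun _ => (√K'.vol)⁻¹) x *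
          ((D + dist K'.center y) ^ (-((n : ℝ) + α / 2)) *
            (D + dist K'.center z) ^ (-((n : ℝ) + α / 2)))) := by
  have hc₀ : 0 ≤ c₀ := (norm_nonneg _).trans hsy
  have hl := K'.side_pos
  have hD : 0 < D := hl.trans_le hsideD
  rw [errorIntegrand, norm_mul, norm_mul, norm_mul, Complex.norm_real, Real.norm_eq_abs]
  by_cases hx : x ∈ K'.set
  swap
  · have h0 : haar K' η x = 0 :=
      abs_nonpos_iff.1 ((abs_haar_le K' η x).trans_eq (indicator_of_notMem hx _))
    simp [h0, indicator_of_notMem hx]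
  rw [indicator_of_mem hx]
  by_cases hy : y ∈ J.set
  · rw [Function.notMem_support.1 fun h => hs h hy, norm_zero, mul_zero, zero_mul, zero_mul]
    positivity
  have hcx := K'.dist_center_le hx
  have hΔ := hK.norm_sub_center_le hCK hα hD (by linarith) (hDJ y hy) (z := z)
  have hΔ' : ‖K x y z - K K'.center y z‖ ≤ CK * K'.side ^ α *
      (2 ^ ((n : ℝ) + α / 2) * (D + dist K'.center y) ^ (-((n : ℝ) + α / 2)) *
        (D + dist K'.center z) ^ (-((n : ℝ) + α / 2))) :=
    hΔ.trans (by gcongr; linarith)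
  have hh := (abs_haar_le K' η x).trans_eq (indicator_of_mem hx _)
  calc _ ≤ CK * K'.side ^ α *
        (2 ^ ((n : ℝ) + α / 2) * (D + dist K'.center y) ^ (-((n : ℝ) + α / 2)) *
          (D + dist K'.center z) ^ (-((n : ℝ) + α / 2))) * c₀ * 1 * (√K'.vol)⁻¹ := by
        gcongr
        exact norm_indC_le J z
    _ = _ := by ring

end ErrorTerm

theorem error_term_kernel_bound_general (n : ℕ)
    (α : ℝ) (hα : α ∈ Set.Ioc (0 : ℝ) 1) :
    ∃ C : ℝ, 0 < C ∧
      ∀ (K : E n → E n → E n → ℂ) (CK : ℝ), CZBounds n α K CK →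
      ∀ (J K' : Cube n), K'.set ⊆ J.set → 4 * K'.side ≤ J.side →
        K'.side ^ ((1 : ℝ) / 2) * J.side ^ ((1 : ℝ) / 2) ≤ setDist K'.clSet (J.set)ᶜ →
      ∀ s : E n → ℂ, Measurable s → Function.support s ⊆ (J.set)ᶜ →
        (∀ᵐ x ∂(volume : Measure (E n)), ‖s x‖ ≤ (Real.sqrt J.vol)⁻¹) →
      ∀ η : Fin n → Bool, η ≠ (fun _ => false) →
        Integrable (fun t : E n × E n × E n =>
          (K t.1 t.2.1 t.2.2 - K K'.center t.2.1 t.2.2) * s t.2.1 * indC J t.2.2 *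
            ((haar K' η t.1 : ℝ) : ℂ)) volume ∧
        ‖∫ t : E n × E n × E n,
            (K t.1 t.2.1 t.2.2 - K K'.center t.2.1 t.2.2) * s t.2.1 * indC J t.2.2 *
              ((haar K' η t.1 : ℝ) : ℂ)‖ ≤
          C * CK * Real.sqrt K'.vol * (Real.sqrt J.vol)⁻¹ *
            (K'.side / J.side) ^ (α / 2) := by
  set A := ∫ w : E n, (1 + ‖w‖) ^ (-((n : ℝ) + α / 2))
  have hA : 0 < A := integral_one_add_norm_rpow_neg_pos volume
    (by rw [Module.finrank_fin_fun]; linarith [hα.1])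
  refine ⟨2 ^ ((n : ℝ) + α / 2) * A ^ 2, by positivity, ?_⟩
  intro K CK hK J K' _ hside hdist s hs hsupp hsbd η hη
  have hn : 0 < n := Nat.pos_of_ne_zero (by rintro rfl; exact hη (funext fun i => i.elim0))
  have hCK := hK.const_nonneg hn
  set D := setDist K'.clSet (J.set)ᶜ
  have hsideD : K'.side ≤ D :=
    le_of_rpow_half_mul_le K'.side_pos.le (by linarith [K'.side_pos]) hdist
  have hDJ : ∀ y ∉ J.set, D ≤ dist K'.center y :=
    fun y hy => setDist_le_dist K'.center_mem_clSet hy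
  have hs' : ∀ᵐ t : E n × E n × E n, ‖s t.2.1‖ ≤ (√J.vol)⁻¹ :=
    (Measure.quasiMeasurePreserving_fst.comp Measure.quasiMeasurePreserving_snd).ae hsbd
  have hbound := hs'.mono fun t ht =>
      norm_errorIntegrand_le (x := t.1) (z := t.2.2) hK hCK hα.1.le hsideD hDJ hsupp η ht
  obtain ⟨hG, hGval⟩ := integral_indicator_mul_decay hα.1 (K'.side_pos.trans_le hsideD) K'
  have hG' := hG.const_mul (CK * K'.side ^ α * 2 ^ ((n : ℝ) + α / 2) * (√J.vol)⁻¹)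
  refine ⟨hG'.mono' (measurable_errorIntegrand hK hs η).aestronglyMeasurable hbound, ?_⟩
  calc _ ≤ _ := norm_integral_le_of_norm_le hG' hbound
    _ = 2 ^ ((n : ℝ) + α / 2) * A ^ 2 * CK * √K'.vol * (√J.vol)⁻¹ *
          (K'.side ^ α * D ^ (-α)) := by
        rw [integral_const_mul, hGval]; ring
    _ ≤ _ := by
        gcongr
        exact rpow_mul_rpow_neg_le_of_rpow_half_mul_le K'.side_pos J.side_pos hα.1.le hdist

/-- kernel bound for the error terms: if `K' ⊂ J`, `ℓ(J) ≥ 4 ℓ(K')`,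
`d(K', ℝⁿ∖J) ≥ ℓ(K')^{1/2} ℓ(J)^{1/2}`, `s` is supported outside `J` with
`|s| ≤ |J|^{-1/2}` a.e., and `h_{K'}` is a cancellative Haar function, then
`|∭ (K(x,y,z) − K(c_{K'},y,z)) s(y) 1_J(z) h_{K'}(x)| ≤ C(n,α) C_K |K'|^{1/2} |J|^{-1/2} (ℓ(K')/ℓ(J))^{α/2}`,
the triple integral converging absolutely. -/
theorem error_term_kernel_bound (n : ℕ) (hn : 0 < n)
    (α : ℝ) (hα : α ∈ Set.Ioc (0 : ℝ) 1) :
    ∃ C : ℝ, 0 < C ∧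
      ∀ (K : E n → E n → E n → ℂ) (CK : ℝ), CZBounds n α K CK →
      ∀ (J K' : Cube n), K'.set ⊆ J.set → 4 * K'.side ≤ J.side →
        K'.side ^ ((1 : ℝ) / 2) * J.side ^ ((1 : ℝ) / 2) ≤ setDist K'.clSet (J.set)ᶜ →
      ∀ s : E n → ℂ, Measurable s → Function.support s ⊆ (J.set)ᶜ →
        (∀ᵐ x ∂(volume : Measure (E n)), ‖s x‖ ≤ (Real.sqrt J.vol)⁻¹) →
      ∀ η : Fin n → Bool, η ≠ (fun _ => false) →
        Integrable (fun t : E n × E n × E n =>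
          (K t.1 t.2.1 t.2.2 - K K'.center t.2.1 t.2.2) * s t.2.1 * indC J t.2.2 *
            ((haar K' η t.1 : ℝ) : ℂ)) volume ∧
        ‖∫ t : E n × E n × E n,
            (K t.1 t.2.1 t.2.2 - K K'.center t.2.1 t.2.2) * s t.2.1 * indC J t.2.2 *
              ((haar K' η t.1 : ℝ) : ℂ)‖ ≤
          C * CK * Real.sqrt K'.vol * (Real.sqrt J.vol)⁻¹ *
            (K'.side / J.side) ^ (α / 2) :=
  error_term_kernel_bound_general n α hα

end Bilinear
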